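/- arXiv:2503.23435 — 3 statements merged into one kernel-verified Lean document; each statement's English description precedes it below -/
import Mathlib

section
/- Let G be a countable group, A a finite alphabet, M ⊆ G a finite subset, S = A^(A^M), and s ∈ S^G. If the non-uniform cellular automaton σ_s : A^G → A^G is invertible, then σ_s is stably invertible. -/
open Function Set Pointwise

section Defs

variable {G A S : Type*} [Group G]

/-- The NUCA `σ_s : A^G → A^G` determined by the configuration of local
defining maps `s ∈ S^G`, `S = A^(A^M)`:
`σ_s(x)(g) = s(g)((g⁻¹x)|_M)` where `(g⁻¹x)(h) = x(gh)`. -/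
def nuca {M : Finset G} (s : G → ((M → A) → A)) : (G → A) → (G → A) :=
  fun x g => s g fun m => x (g * (m : G))

/-- The closure, in the prodiscrete topology on `S^G`, of the shift orbit
`{gs : g ∈ G}`, where `(gs)(h) = s(g⁻¹h)`. -/
def orbitClosure (s : G → S) : Set (G → S) :=
  @closure (G → S) (@Pi.topologicalSpace G (fun _ => S) fun _ => ⊥)
    {p | ∃ g : G, p = fun h => s (g⁻¹ * h)}

/-- `τ` is a NUCA with finite memory. -/
def IsNUCAFin (τ : (G → A) → (G → A)) : Prop :=
  ∃ (M : Finset G) (s : G → ((M → A) → A)), τ = nuca s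

/-- `τ` is invertible: it is bijective and its inverse is a NUCA with finite memory. -/
def IsInvertibleNUCA (τ : (G → A) → (G → A)) : Prop :=
  Function.Bijective τ ∧ ∃ ρ : (G → A) → (G → A), IsNUCAFin ρ ∧
    Function.LeftInverse ρ τ ∧ Function.RightInverse ρ τ

/-- `σ_s` is stably injective: `σ_p` is injective for every `p ∈ Σ(s)`. -/
def StablyInjective {M : Finset G} (s : G → ((M → A) → A)) : Prop :=
  ∀ p ∈ orbitClosure s, Function.Injective (nuca p)

/-- `σ_s` is stably invertible. -/
def StablyInvertible {M : Finset G} (s : G → ((M → A) → A)) : Prop :=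
  ∃ (N : Finset G) (t : G → ((N → A) → A)),
    ∀ p ∈ orbitClosure s, ∃ q ∈ orbitClosure t,
      nuca p ∘ nuca q = id ∧ nuca q ∘ nuca p = id

/-- Two configurations are asymptotic if they agree outside a finite set. -/
def Asymptotic (x y : G → S) : Prop :=
  ∃ Ω : Finset G, ∀ g ∉ Ω, x g = y g

/-- `s` is asymptotically constant. -/
def AsymptoticallyConstant (s : G → S) : Prop :=
  ∃ c : S, Asymptotic s fun _ => c

/-- `τ` is pre-injective. -/
def PreInjective (τ : (G → A) → (G → A)) : Prop :=
  ∀ x y : G → A, Asymptotic x y → τ x = τ y → x = y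

/-- `τ` is post-surjective. -/
def PostSurjective (τ : (G → A) → (G → A)) : Prop :=
  ∀ x y : G → A, Asymptotic y (τ x) → ∃ z : G → A, Asymptotic z x ∧ τ z = y

/-- `σ_s` is stably post-surjective: `σ_p` is post-surjective for all `p ∈ Σ(s)`. -/
def StablyPostSurjective {M : Finset G} (s : G → ((M → A) → A)) : Prop :=
  ∀ p ∈ orbitClosure s, PostSurjective (nuca p)

/-- `τ` is a cellular automaton: a NUCA with finite memory and a constant
configuration of local defining maps. -/
def IsCellularAutomaton (τ : (G → A) → (G → A)) : Prop :=
  ∃ (M : Finset G) (μ : (M → A) → A), τ = nuca fun _ : G => μ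

/-- `G` is surjunctive: over every finite alphabet, injective CA are surjective. -/
def Surjunctive (G : Type*) [Group G] : Prop :=
  ∀ (B : Type) [Fintype B] (τ : (G → B) → (G → B)),
    IsCellularAutomaton τ → Function.Injective τ → Function.Surjective τ

/-- `G` is post-injunctive: over every finite alphabet, post-surjective CA are
pre-injective. -/
def PostInjunctive (G : Type*) [Group G] : Prop :=
  ∀ (B : Type) [Fintype B] (τ : (G → B) → (G → B)),
    IsCellularAutomaton τ → PostSurjective τ → PreInjective τ

/-- `s` has uniformly bounded singularity: for every finite symmetric `E ∋ 1`
there is a finite `F ⊇ E` such that `s` is constant on `FE ∖ F`. -/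
def UniformlyBoundedSingularity (s : G → S) : Prop :=
  ∀ E : Finset G, (1 : G) ∈ E → (∀ g ∈ E, g⁻¹ ∈ E) →
    ∃ F : Finset G, E ⊆ F ∧ ∃ c : S,
      ∀ g ∈ ((F : Set G) * (E : Set G)) \ (F : Set G), s g = c

end Defs


/-!
Write `(p, q)` for the configuration `h ↦ (p h, q h)`. If `σ_s ∘ σ_t = σ_t ∘ σ_s = Id`,
then the same holds for every shift `(gs, gt)`, and since the value of `σ_p ∘ σ_q` at a cell
depends only on finitely many values of `p` and `q`, it persists in the limit for every
`(p, q)` in the orbit closure of `(s, t)`. As `S` and `T` are finite, this orbit closure is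
compact, so its projection to the first factor is closed and is therefore all of `Σ(s)`:
every `p ∈ Σ(s)` has a partner `q ∈ Σ(t)` with `(p, q) ∈ Σ((s, t))`.
-/

section OrbitClosure

variable {G S T : Type*} [Group G]

lemma orbitClosure_eq_closure [TopologicalSpace S] [DiscreteTopology S] (s : G → S) :
    orbitClosure s = closure {p | ∃ g : G, p = fun h => s (g⁻¹ * h)} := by
  obtain rfl := DiscreteTopology.eq_bot (α := S)
  rfl

lemma mem_orbitClosure_iff {s p : G → S} :
    p ∈ orbitClosure s ↔ ∀ F : Finset G, ∃ g : G, ∀ h ∈ F, p h = s (g⁻¹ * h) := by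
  let : TopologicalSpace S := ⊥
  have : DiscreteTopology S := ⟨rfl⟩
  rw [orbitClosure_eq_closure, mem_closure_iff]
  constructor
  · intro H F
    obtain ⟨p', hp', g, rfl⟩ := H _
      (isOpen_set_pi F.finite_toSet fun h _ => isOpen_discrete {p h}) fun h _ => rfl
    exact ⟨g, fun h hh => (hp' h hh).symm⟩
  · intro H U hU hpU
    obtain ⟨I, u, hIu, hsub⟩ := isOpen_pi_iff.mp hU p hpU
    obtain ⟨g, hg⟩ := H I
    refine ⟨fun h => s (g⁻¹ * h), hsub fun h hh => ?_, g, rfl⟩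
    simpa only [← hg h hh] using (hIu h hh).2

lemma orbitClosure_eq_image_fst_orbitClosure_prod [Finite S] [Finite T]
    (s : G → S) (t : G → T) :
    orbitClosure s = (fun r h => (r h).1) '' orbitClosure fun h => (s h, t h) := by
  let : TopologicalSpace S := ⊥
  let : TopologicalSpace T := ⊥
  have : DiscreteTopology S := ⟨rfl⟩
  have : DiscreteTopology T := ⟨rfl⟩
  have hfst : Continuous fun (r : G → S × T) h => (r h).1 :=
    continuous_pi fun h => continuous_fst.comp (continuous_apply h)
  rw [orbitClosure_eq_closure, orbitClosure_eq_closure,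
    image_closure_of_isCompact isClosed_closure.isCompact hfst.continuousOn]
  congr 1
  ext p
  simp [eq_comm]

lemma exists_forall_finset_eq_shift [Finite S] [Finite T] {s p : G → S} (t : G → T)
    (hp : p ∈ orbitClosure s) :
    ∃ q ∈ orbitClosure t, ∀ F : Finset G, ∃ g : G,
      ∀ h ∈ F, p h = s (g⁻¹ * h) ∧ q h = t (g⁻¹ * h) := by
  rw [orbitClosure_eq_image_fst_orbitClosure_prod s t] at hp
  obtain ⟨r, hr, rfl⟩ := hp
  have hr' := mem_orbitClosure_iff.mp hr
  refine ⟨fun h => (r h).2, mem_orbitClosure_iff.mpr fun F => ?_, fun F => ?_⟩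
  · obtain ⟨g, hg⟩ := hr' F
    exact ⟨g, fun h hh => by rw [hg h hh]⟩
  · obtain ⟨g, hg⟩ := hr' F
    exact ⟨g, fun h hh => Prod.ext_iff.mp (hg h hh)⟩

end OrbitClosure

section Shift

variable {G A : Type*} [Group G] {M N : Finset G}

lemma nuca_shift (s : G → (M → A) → A) (g : G) (x : G → A) :
    nuca (fun h => s (g⁻¹ * h)) x = fun h => nuca s (fun k => x (g * k)) (g⁻¹ * h) := by
  funext h
  simp only [nuca, mul_inv_cancel_left, mul_assoc]

lemma Function.LeftInverse.nuca_shift {s : G → (M → A) → A} {t : G → (N → A) → A}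
    (hst : LeftInverse (nuca s) (nuca t)) (g : G) :
    LeftInverse (nuca fun h => s (g⁻¹ * h)) (nuca fun h => t (g⁻¹ * h)) := by
  intro x
  rw [_root_.nuca_shift, _root_.nuca_shift]
  funext h
  simp only [inv_mul_cancel_left]
  rw [hst, mul_inv_cancel_left]

lemma nuca_nuca_apply_congr {p p' : G → (M → A) → A} {q q' : G → (N → A) → A} {g : G}
    (hp : p g = p' g) (hq : ∀ m ∈ M, q (g * m) = q' (g * m)) (x : G → A) :
    nuca p (nuca q x) g = nuca p' (nuca q' x) g := by
  simp only [nuca, hp]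
  congr 1
  funext m
  rw [hq m m.2]

lemma leftInverse_nuca_of_forall_finset_eq_shift
    {s p : G → (M → A) → A} {t q : G → (N → A) → A}
    (happ : ∀ F : Finset G, ∃ g : G, ∀ h ∈ F, p h = s (g⁻¹ * h) ∧ q h = t (g⁻¹ * h))
    (hst : LeftInverse (nuca s) (nuca t)) :
    LeftInverse (nuca p) (nuca q) := by
  classical
  intro x
  funext g
  obtain ⟨g₀, hg₀⟩ := happ (insert g (M.image (g * ·)))
  have hp : p g = s (g₀⁻¹ * g) := (hg₀ g (Finset.mem_insert_self _ _)).1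
  have hq : ∀ m ∈ M, q (g * m) = t (g₀⁻¹ * (g * m)) := fun m hm =>
    (hg₀ _ (Finset.mem_insert_of_mem (Finset.mem_image_of_mem _ hm))).2
  exact (nuca_nuca_apply_congr (p' := fun h => s (g₀⁻¹ * h)) (q' := fun h => t (g₀⁻¹ * h))
    hp hq x).trans (congrFun (hst.nuca_shift g₀ x) g)

end Shift

theorem invertible_implies_stablyInvertible_general
    {G A : Type*} [Group G] [Fintype A]
    {M : Finset G} (s : G → ((M → A) → A))
    (h : IsInvertibleNUCA (nuca s)) :
    StablyInvertible s := by
  obtain ⟨-, _, ⟨N, t, rfl⟩, hts, hst⟩ := h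
  refine ⟨N, t, fun p hp => ?_⟩
  obtain ⟨q, hq, happ⟩ := exists_forall_finset_eq_shift t hp
  refine ⟨q, hq, (leftInverse_nuca_of_forall_finset_eq_shift happ hst).comp_eq_id,
    (leftInverse_nuca_of_forall_finset_eq_shift (fun F => ?_) hts).comp_eq_id⟩
  obtain ⟨g, hg⟩ := happ F
  exact ⟨g, fun h hh => (hg h hh).symm⟩

/-- if the NUCA `σ_s` (finite memory `M`, countable universe `G`,
finite alphabet `A`) is invertible, then it is stably invertible. -/
theorem invertible_implies_stablyInvertible
    {G A : Type*} [Group G] [Countable G] [Fintype A]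
    {M : Finset G} (s : G → ((M → A) → A))
    (h : IsInvertibleNUCA (nuca s)) :
    StablyInvertible s :=
  invertible_implies_stablyInvertible_general s h
end

section
/- Let G be a group, A an alphabet, and M, N ⊆ G finite subsets with 1_G ∈ M ∩ N. Let S = A^(A^M), T = A^(A^N), s ∈ S^G, t ∈ T^G, and g ∈ G. Then the condition σ_t(σ_s(x))(g) = x(g) for all x ∈ A^G holds if and only if for every y ∈ A^(NM) one has t(g)(h ↦ f^{+M}_{gN, s|_{gN}}(g·y)(gh)) = y(1_G), where g·y ∈ A^(gNM) is the configuration defined by (g·y)(gh) = y(h) for h ∈ NM, and the outer map h ↦ … is viewed as an element of A^N. -/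
open Function Set Pointwise

/-- The induced local map `f^{+M}_{E,w} : A^(EM) → A^E`,
`f^{+M}_{E,w}(x)(g) = w(g)((g⁻¹x)|_M)`. -/
def inducedLocalMap {G A : Type*} [Group G] (M : Finset G) (E : Set G)
    (w : E → ((M → A) → A)) :
    ((E * (M : Set G) : Set G) → A) → (E → A) :=
  fun x e => w e fun m =>
    x ⟨(e : G) * m, Set.mul_mem_mul e.2 (Finset.mem_coe.mpr m.2)⟩

lemma mem_NM_of_mem_smul_mul {G : Type*} [Group G] {N M : Set G} {g k : G}
    (hk : k ∈ (g • N) * M) : g⁻¹ * k ∈ N * M := by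
  rw [Set.mem_mul] at hk
  obtain ⟨a, ha, b, hb, rfl⟩ := hk
  rw [Set.mem_smul_set] at ha
  obtain ⟨n, hn, rfl⟩ := ha
  rw [Set.mem_mul]
  exact ⟨n, hn, b, hb, by simp [smul_eq_mul, mul_assoc]⟩

theorem nuca_nuca_apply_eq_inducedLocalMap {G A : Type*} [Group G] {M N : Finset G}
    (s : G → ((M → A) → A)) (t : G → ((N → A) → A)) (x : G → A) (g : G) :
    t g (fun h =>
        inducedLocalMap M (g • (N : Set G)) (fun a => s a) (fun k => x (g * (g⁻¹ * k)))
          ⟨g * (h : G), Set.mem_smul_set.mpr ⟨h, Finset.mem_coe.mpr h.2, rfl⟩⟩) =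
      nuca t (nuca s x) g := by
  simp only [mul_inv_cancel_left]
  rfl

/-- `σ_t(σ_s(x))(g) = x(g)` for all `x ∈ A^G` iff for every
`y ∈ A^(NM)`, `t(g)(h ↦ f^{+M}_{gN, s|_gN}(g·y)(gh)) = y(1_G)`, where
`(g·y)(gh) = y(h)` for `h ∈ NM`. -/
theorem compo_id_iff {G A : Type*} [Group G]
    {M N : Finset G} (hM : (1 : G) ∈ M) (hN : (1 : G) ∈ N)
    (s : G → ((M → A) → A)) (t : G → ((N → A) → A)) (g : G) :
    (∀ x : G → A, nuca t (nuca s x) g = x g) ↔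
      ∀ y : ((N : Set G) * (M : Set G) : Set G) → A,
        t g (fun h =>
          inducedLocalMap M (g • (N : Set G)) (fun a => s a)
            (fun k => y ⟨g⁻¹ * k, mem_NM_of_mem_smul_mul k.2⟩)
            ⟨g * (h : G), Set.mem_smul_set.mpr ⟨h, Finset.mem_coe.mpr h.2, rfl⟩⟩) =
        y ⟨1, by
          rw [Set.mem_mul]
          exact ⟨1, Finset.mem_coe.mpr hN, 1, Finset.mem_coe.mpr hM, one_mul 1⟩⟩ := by
  have one_mem : (1 : G) ∈ (N : Set G) * (M : Set G) := by
    simpa using Set.mul_mem_mul (Finset.mem_coe.mpr hN) (Finset.mem_coe.mpr hM)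
  constructor
  · intro H y
    have : Nonempty A := ⟨y ⟨1, one_mem⟩⟩
    have translate_injective : Injective fun k : ((N : Set G) * (M : Set G) : Set G) => g * k :=
      (mul_right_injective g).comp Subtype.val_injective
    -- every pattern on `NM` is the `g`-translate restriction of a global configuration
    obtain ⟨x, rfl⟩ := translate_injective.surjective_comp_right y
    simpa using (nuca_nuca_apply_eq_inducedLocalMap s t x g).trans (H x)
  · intro H x
    simpa using (nuca_nuca_apply_eq_inducedLocalMap s t x g).symm.trans (H fun k => x (g * k))
end

section
/- Let A be an alphabet and G a group. Let M ⊆ G be a finite subset and S = A^(A^M). Suppose that σ_t ∘ σ_s = Id on A^G for some s, t ∈ S^G, and that s has uniformly bounded singularity. Then for each finite subset E ⊆ G there exist asymptotically constant configurations p, q ∈ S^G such that p|_E = s|_E, q|_E = t|_E, and σ_q ∘ σ_p = Id on A^G. -/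
/-!
Near each `g`, `σ_t ∘ σ_s` reads `s` only on `gM` and `t` only at `g`. Uniformly bounded
singularity gives a finite `F ⊇ E` such that `s` equals a constant `c` on a collar `FD ∖ F`,
with `D` built from `M`. If some translate `g₀M` lies in the collar, cut `s` off to `c`
outside `F` and `t` off to `t g₀` outside `F ∪ FM⁻¹`: every point far from `F` then behaves
like `g₀`. Otherwise `FM⁻¹` is a finite set closed under right multiplication by each
`n ∈ M`, so, being finite, also under right division by `n`; outside it, the pair of
coordinate projections along some `n₀, m₀ ∈ M` with `n₀m₀ = 1` (which exist as soon as
`|A| ≥ 2`) inverts itself.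
-/

open Function Set Pointwise

theorem asymptoticallyConstant_piecewise {G S : Type*} [DecidableEq G] (P : Finset G)
    (s : G → S) (c : S) : AsymptoticallyConstant (P.piecewise s fun _ => c) :=
  ⟨c, P, fun _ hg => P.piecewise_eq_of_notMem _ _ hg⟩

section

variable {G A : Type*} [Group G] {M : Finset G}

theorem nuca_nuca_apply_of_translate {s t p q : G → ((M → A) → A)}
    (hst : nuca t ∘ nuca s = id) {g g₀ : G} (hq : q g = t g₀)
    (hp : ∀ n : M, p (g * n) = s (g₀ * n)) (x : G → A) :
    nuca q (nuca p x) g = x g := by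
  have h := congrFun (congrFun hst fun h => x (g * (g₀⁻¹ * h))) g₀
  simp only [comp_apply, nuca, id, mul_assoc, inv_mul_cancel_left, inv_mul_cancel, mul_one] at h
  simpa only [nuca, hq, hp, mul_assoc] using h

theorem nuca_nuca_apply_of_proj {p q : G → ((M → A) → A)} {n₀ m₀ : M}
    (hnm : (n₀ : G) * m₀ = 1) {g : G} (hq : q g = fun u => u n₀)
    (hp : p (g * n₀) = fun u => u m₀) (x : G → A) :
    nuca q (nuca p x) g = x g := by
  simp only [nuca, hq, hp, mul_assoc, hnm, mul_one]

theorem exists_mul_eq_one_of_nuca_comp_eq_id [Nontrivial A] {s t : G → ((M → A) → A)}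
    (hst : nuca t ∘ nuca s = id) : ∃ n₀ m₀ : M, (n₀ : G) * m₀ = 1 := by
  classical
  by_contra! hM
  have hst₁ (x : G → A) : t 1 (fun n => s n fun m => x (n * m)) = x 1 := by
    simpa [nuca] using congrFun (congrFun hst x) 1
  obtain ⟨a, b, hab⟩ := exists_pair_ne A
  have ha := hst₁ fun _ => a
  have hb := hst₁ (update (fun _ => a) 1 b)
  simp only [update_of_ne (hM _ _), update_self] at hb
  exact hab (ha.symm.trans hb)

theorem UniformlyBoundedSingularity.exists_superset_collar [DecidableEq G] {S : Type*}
    {s : G → S} (hs : UniformlyBoundedSingularity s) (E D : Finset G) :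
    ∃ F : Finset G, E ⊆ F ∧ ∃ c : S, ∀ g ∈ F * D, g ∉ F → s g = c := by
  set K := insert 1 (E ∪ D)
  obtain ⟨F, hKF, c, hc⟩ := hs (K ∪ K⁻¹) (by simp [K])
    (fun g hg => by simpa [or_comm] using hg)
  refine ⟨F, fun g hg => hKF (by simp [K, hg]), c, fun g hg hgF => hc g ⟨?_, hgF⟩⟩
  rw [← Finset.coe_mul]
  exact Finset.mul_subset_mul_left (fun d hd => by simp [K, hd]) hg

theorem Finset.mem_of_mul_mem_of_forall_mul_mem {B : Finset G} {a : G}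
    (hB : ∀ g ∈ B, g * a ∈ B) {g : G} (hga : g * a ∈ B) : g ∈ B := by
  have hmap : B.map (mulRightEmbedding a) = B :=
    Finset.map_eq_of_subset fun _ h => by
      obtain ⟨b, hb, rfl⟩ := Finset.mem_map.1 h
      exact hB b hb
  rw [← hmap] at hga
  obtain ⟨b, hb, hba⟩ := Finset.mem_map.1 hga
  rwa [← mul_right_cancel hba]

theorem local_approximation_of_piecewise [DecidableEq G] {s t : G → ((M → A) → A)}
    {E P Q : Finset G} (hEP : E ⊆ P) (hEQ : E ⊆ Q) {c d : (M → A) → A}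
    (h : nuca (Q.piecewise t fun _ => d) ∘ nuca (P.piecewise s fun _ => c) = id) :
    ∃ p q : G → ((M → A) → A),
      AsymptoticallyConstant p ∧ AsymptoticallyConstant q ∧
      (∀ g ∈ E, p g = s g) ∧ (∀ g ∈ E, q g = t g) ∧ nuca q ∘ nuca p = id :=
  ⟨_, _, asymptoticallyConstant_piecewise P s c, asymptoticallyConstant_piecewise Q t d,
    fun _ hg => P.piecewise_eq_of_mem _ _ (hEP hg),
    fun _ hg => Q.piecewise_eq_of_mem _ _ (hEQ hg), h⟩

section Patching

variable [DecidableEq G] {s t : G → ((M → A) → A)}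

theorem nuca_piecewise_comp_eq_id_of_collar (hst : nuca t ∘ nuca s = id)
    {P Q : Finset G} {c : (M → A) → A} {g₀ : G} (hg₀ : ∀ n : M, s (g₀ * n) = c)
    (hQ : ∀ g ∈ Q, ∀ n : M, g * n ∉ P → s (g * n) = c)
    (hQc : ∀ g ∉ Q, ∀ n : M, g * n ∉ P) :
    nuca (Q.piecewise t fun _ => t g₀) ∘ nuca (P.piecewise s fun _ => c) = id := by
  funext x g
  by_cases hg : g ∈ Q
  · refine nuca_nuca_apply_of_translate hst (Q.piecewise_eq_of_mem _ _ hg) (fun n => ?_) x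
    by_cases hn : g * n ∈ P
    · exact P.piecewise_eq_of_mem _ _ hn
    · rw [P.piecewise_eq_of_notMem _ _ hn, hQ g hg n hn]
  · refine nuca_nuca_apply_of_translate hst (Q.piecewise_eq_of_notMem t (fun _ => t g₀) hg)
      (fun n => ?_) x
    rw [P.piecewise_eq_of_notMem _ _ (hQc g hg n), hg₀]

theorem nuca_piecewise_comp_eq_id_of_mul_mem (hst : nuca t ∘ nuca s = id) {B : Finset G}
    (hB : ∀ g ∈ B, ∀ n : M, g * n ∈ B) {n₀ m₀ : M} (hnm : (n₀ : G) * m₀ = 1) :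
    nuca (B.piecewise t fun _ u => u n₀) ∘ nuca (B.piecewise s fun _ u => u m₀) = id := by
  funext x g
  by_cases hg : g ∈ B
  · exact nuca_nuca_apply_of_translate hst (B.piecewise_eq_of_mem _ _ hg)
      (fun n => B.piecewise_eq_of_mem _ _ (hB g hg n)) x
  · have hgn : g * n₀ ∉ B := fun h =>
      hg (Finset.mem_of_mul_mem_of_forall_mul_mem (fun b hb => hB b hb n₀) h)
    exact nuca_nuca_apply_of_proj hnm (B.piecewise_eq_of_notMem _ _ hg)
      (B.piecewise_eq_of_notMem _ _ hgn) x

end Patching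

section Collar

variable [DecidableEq G] {F D : Finset G}

theorem mem_mul_inv_of_mul_mem {g n : G} (hn : n ∈ M) (h : g * n ∈ F) : g ∈ F * M⁻¹ :=
  Finset.mem_mul.2 ⟨g * n, h, n⁻¹, Finset.inv_mem_inv hn, mul_inv_cancel_right g n⟩

theorem union_mul_inv_mul_subset (hMD : M ⊆ D) (hMMD : M⁻¹ * M ⊆ D) :
    (F ∪ F * M⁻¹) * M ⊆ F * D := by
  rw [Finset.union_mul, mul_assoc]
  exact Finset.union_subset (Finset.mul_subset_mul_left hMD) (Finset.mul_subset_mul_left hMMD)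

theorem mem_mul_inv_of_forall_mul_mem_mul
    (hF : ∀ g : G, ∃ n : M, g * n ∈ F * D → g * n ∈ F) {g : G}
    (hg : ∀ n ∈ M, g * n ∈ F * D) : g ∈ F * M⁻¹ := by
  obtain ⟨n, hn⟩ := hF g
  exact mem_mul_inv_of_mul_mem n.2 (hn (hg n n.2))

theorem subset_mul_inv_of_forall_exists (hF : ∀ g : G, ∃ n : M, g * n ∈ F * D → g * n ∈ F)
    (hMD : M ⊆ D) : F ⊆ F * M⁻¹ := fun _ hf =>
  mem_mul_inv_of_forall_mul_mem_mul hF fun _ hn =>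
    Finset.mul_subset_mul_left hMD (Finset.mul_mem_mul hf hn)

theorem mul_mem_mul_inv_of_forall_exists
    (hF : ∀ g : G, ∃ n : M, g * n ∈ F * D → g * n ∈ F) (hMD : M⁻¹ * M * M ⊆ D)
    {g : G} (hg : g ∈ F * M⁻¹) (n : M) : g * n ∈ F * M⁻¹ :=
  mem_mul_inv_of_forall_mul_mem_mul hF fun _ hk => Finset.mul_subset_mul_left hMD <| by
    rw [← mul_assoc, ← mul_assoc]
    exact Finset.mul_mem_mul (Finset.mul_mem_mul hg n.2) hk

end Collar

end

/-- if `σ_t ∘ σ_s = Id` and `s` has uniformly bounded singularity,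
then for every finite `E ⊆ G` there are asymptotically constant `p, q` agreeing
with `s, t` on `E` such that `σ_q ∘ σ_p = Id`. -/
theorem local_approximation_of_left_inverse {G A : Type*} [Group G]
    {M : Finset G} (s t : G → ((M → A) → A))
    (hst : nuca t ∘ nuca s = id)
    (hubs : UniformlyBoundedSingularity s) (E : Finset G) :
    ∃ p q : G → ((M → A) → A),
      AsymptoticallyConstant p ∧ AsymptoticallyConstant q ∧
      (∀ g ∈ E, p g = s g) ∧ (∀ g ∈ E, q g = t g) ∧
      nuca q ∘ nuca p = id := by
  classical
  obtain _ | _ := subsingleton_or_nontrivial A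
  · exact local_approximation_of_piecewise (c := s 1) (d := t 1) subset_rfl subset_rfl
      (funext fun _ => Subsingleton.elim _ _)
  obtain ⟨n₀, m₀, hnm⟩ := exists_mul_eq_one_of_nuca_comp_eq_id hst
  set D := M ∪ M⁻¹ * M ∪ M⁻¹ * M * M
  have hMD : M ⊆ D := Finset.subset_union_left.trans Finset.subset_union_left
  have hMMD : M⁻¹ * M ⊆ D := Finset.subset_union_right.trans Finset.subset_union_left
  have hMMMD : M⁻¹ * M * M ⊆ D := Finset.subset_union_right
  obtain ⟨F, hEF, c, hc⟩ := hubs.exists_superset_collar E D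
  by_cases hcollar : ∃ g₀ : G, ∀ n : M, g₀ * n ∈ F * D ∧ g₀ * n ∉ F
  · obtain ⟨g₀, hg₀⟩ := hcollar
    exact local_approximation_of_piecewise hEF (hEF.trans Finset.subset_union_left) <|
      nuca_piecewise_comp_eq_id_of_collar hst (fun n => hc _ (hg₀ n).1 (hg₀ n).2)
        (fun g hg n => hc _ (union_mul_inv_mul_subset hMD hMMD (Finset.mul_mem_mul hg n.2)))
        (fun g hg n hgn => hg (Finset.mem_union_right _ (mem_mul_inv_of_mul_mem n.2 hgn)))
  · push Not at hcollar
    exact local_approximation_of_piecewise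
      (hEF.trans (subset_mul_inv_of_forall_exists hcollar hMD))
      (hEF.trans (subset_mul_inv_of_forall_exists hcollar hMD))
      (nuca_piecewise_comp_eq_id_of_mul_mem hst
        (fun _ hg => mul_mem_mul_inv_of_forall_exists hcollar hMMMD hg) hnm)
end
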